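/- Suppose 𝒪 is half-factorial and the spec-map is bijective. Let 𝔓 be a nonzero prime ideal of 𝒪_K containing the conductor 𝔣, and suppose 𝔓 = π·𝒪_K for some element π ∈ 𝒪. Then no element of 𝔓² ∩ 𝒪 is an irreducible element of 𝒪. -/

import Mathlib

open NumberField

set_option synthInstance.maxHeartbeats 1000000
set_option maxHeartbeats 1000000

variable {K : Type*} [Field K] [NumberField K]

/-- A subring `O ⊆ 𝓞 K` is an *order* in `K` if its field of fractions is `K`;
equivalently, every element of `𝓞 K` admits a nonzero integer multiple lying in `O`. -/
def Subring.IsOrder (O : Subring (𝓞 K)) : Prop :=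
  ∀ x : 𝓞 K, ∃ n : ℤ, n ≠ 0 ∧ (n : 𝓞 K) * x ∈ O

/-- The conductor `𝔣 = {x ∈ 𝓞 K : x • 𝓞 K ⊆ O}` of a subring `O ⊆ 𝓞 K`,
as an ideal of `𝓞 K`. -/
def conductorIdeal (O : Subring (𝓞 K)) : Ideal (𝓞 K) where
  carrier := {x : 𝓞 K | ∀ y : 𝓞 K, x * y ∈ O}
  add_mem' := by
    intro a b ha hb y
    simpa [add_mul] using O.add_mem (ha y) (hb y)
  zero_mem' := by
    intro y
    simpa using O.zero_mem
  smul_mem' := by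
    intro c x hx y
    simpa [smul_eq_mul, mul_assoc, mul_comm, mul_left_comm] using hx (c * y)

/-- A commutative ring is *half-factorial* if every nonzero nonunit is a product of
irreducible elements, and any two factorizations of a nonzero nonunit into irreducibles
have the same length. -/
def IsHalfFactorialRing (R : Type*) [CommRing R] : Prop :=
  (∀ a : R, a ≠ 0 → ¬ IsUnit a →
      ∃ l : Multiset R, (∀ b ∈ l, Irreducible b) ∧ l.prod = a) ∧
  (∀ a : R, a ≠ 0 → ¬ IsUnit a →
      ∀ l₁ l₂ : Multiset R, (∀ b ∈ l₁, Irreducible b) → (∀ b ∈ l₂, Irreducible b) →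
        l₁.prod = a → l₂.prod = a → Multiset.card l₁ = Multiset.card l₂)

/-- The spec-map `𝔓 ↦ 𝔓 ∩ 𝒪` is a bijection between the nonzero prime ideals of `𝓞 K`
and the nonzero prime ideals of `O`. -/
def SpecMapBijective (O : Subring (𝓞 K)) : Prop :=
  Set.BijOn (fun P : Ideal (𝓞 K) => P.comap O.subtype)
    {P : Ideal (𝓞 K) | P.IsPrime ∧ P ≠ ⊥} {p : Ideal O | p.IsPrime ∧ p ≠ ⊥}

/-- The localization `𝒪_𝔭` of `O` at a prime ideal `𝔭` of `O`, realized as a subring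
of `K`. -/
def locO (O : Subring (𝓞 K)) (p : Ideal O) (hp : p.IsPrime) : Subring K where
  carrier := {x : K | ∃ a s : O, s ∉ p ∧
    x * algebraMap (𝓞 K) K (s : 𝓞 K) = algebraMap (𝓞 K) K (a : 𝓞 K)}
  one_mem' := ⟨1, 1, fun h => hp.ne_top ((Ideal.eq_top_iff_one _).mpr h), by simp⟩
  zero_mem' := ⟨0, 1, fun h => hp.ne_top ((Ideal.eq_top_iff_one _).mpr h), by simp⟩
  mul_mem' := by
    rintro x y ⟨a, s, hs, hx⟩ ⟨b, t, ht, hy⟩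
    refine ⟨a * b, s * t, fun h => ((hp.mem_or_mem h).elim hs ht), ?_⟩
    push_cast [map_mul]
    calc x * y * (algebraMap (𝓞 K) K s * algebraMap (𝓞 K) K t)
        = (x * algebraMap (𝓞 K) K s) * (y * algebraMap (𝓞 K) K t) := by ring
      _ = _ := by rw [hx, hy]
  add_mem' := by
    rintro x y ⟨a, s, hs, hx⟩ ⟨b, t, ht, hy⟩
    refine ⟨a * t + b * s, s * t, fun h => ((hp.mem_or_mem h).elim hs ht), ?_⟩
    push_cast [map_mul, map_add]
    calc (x + y) * (algebraMap (𝓞 K) K s * algebraMap (𝓞 K) K t)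
        = (x * algebraMap (𝓞 K) K s) * algebraMap (𝓞 K) K t
          + (y * algebraMap (𝓞 K) K t) * algebraMap (𝓞 K) K s := by ring
      _ = _ := by rw [hx, hy]
  neg_mem' := by
    rintro x ⟨a, s, hs, hx⟩
    exact ⟨-a, s, hs, by push_cast [map_neg]; rw [neg_mul, hx]⟩

/-- The localization `(𝒪_K)_𝔭 = 𝒪_K · (𝒪 ∖ 𝔭)⁻¹` of `𝓞 K` at the prime ideal `𝔭` of `O`
(the integral closure of `𝒪_𝔭`), realized as a subring of `K`. -/
def locOK (O : Subring (𝓞 K)) (p : Ideal O) (hp : p.IsPrime) : Subring K where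
  carrier := {x : K | ∃ (a : 𝓞 K) (s : O), s ∉ p ∧
    x * algebraMap (𝓞 K) K (s : 𝓞 K) = algebraMap (𝓞 K) K a}
  one_mem' := ⟨1, 1, fun h => hp.ne_top ((Ideal.eq_top_iff_one _).mpr h), by simp⟩
  zero_mem' := ⟨0, 1, fun h => hp.ne_top ((Ideal.eq_top_iff_one _).mpr h), by simp⟩
  mul_mem' := by
    rintro x y ⟨a, s, hs, hx⟩ ⟨b, t, ht, hy⟩
    refine ⟨a * b, s * t, fun h => ((hp.mem_or_mem h).elim hs ht), ?_⟩
    push_cast [map_mul]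
    calc x * y * (algebraMap (𝓞 K) K s * algebraMap (𝓞 K) K t)
        = (x * algebraMap (𝓞 K) K s) * (y * algebraMap (𝓞 K) K t) := by ring
      _ = _ := by rw [hx, hy]
  add_mem' := by
    rintro x y ⟨a, s, hs, hx⟩ ⟨b, t, ht, hy⟩
    refine ⟨a * t + b * s, s * t, fun h => ((hp.mem_or_mem h).elim hs ht), ?_⟩
    push_cast [map_mul, map_add]
    calc (x + y) * (algebraMap (𝓞 K) K s * algebraMap (𝓞 K) K t)
        = (x * algebraMap (𝓞 K) K s) * algebraMap (𝓞 K) K t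
          + (y * algebraMap (𝓞 K) K t) * algebraMap (𝓞 K) K s := by ring
      _ = _ := by rw [hx, hy]
  neg_mem' := by
    rintro x ⟨a, s, hs, hx⟩
    exact ⟨-a, s, hs, by push_cast [map_neg]; rw [neg_mul, hx]⟩

lemma locO_le_locOK (O : Subring (𝓞 K)) (p : Ideal O) (hp : p.IsPrime) :
    locO O p hp ≤ locOK O p hp := by
  rintro x ⟨a, s, hs, hx⟩
  exact ⟨(a : 𝓞 K), s, hs, hx⟩

/-- The subring `O + I` of `𝓞 K`, for a subring `O` and an ideal `I` of `𝓞 K`. -/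
def orderPlus (O : Subring (𝓞 K)) (I : Ideal (𝓞 K)) : Subring (𝓞 K) where
  carrier := {x : 𝓞 K | ∃ a ∈ O, ∃ b ∈ I, x = a + b}
  one_mem' := ⟨1, O.one_mem, 0, I.zero_mem, by ring⟩
  zero_mem' := ⟨0, O.zero_mem, 0, I.zero_mem, by ring⟩
  mul_mem' := by
    rintro x y ⟨a, ha, b, hb, rfl⟩ ⟨c, hc, d, hd, rfl⟩
    refine ⟨a * c, O.mul_mem ha hc, a * d + b * c + b * d,
      I.add_mem (I.add_mem (I.mul_mem_left a hd) (I.mul_mem_right c hb)) (I.mul_mem_left b hd), by ring⟩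
  add_mem' := by
    rintro x y ⟨a, ha, b, hb, rfl⟩ ⟨c, hc, d, hd, rfl⟩
    exact ⟨a + c, O.add_mem ha hc, b + d, I.add_mem hb hd, by ring⟩
  neg_mem' := by
    rintro x ⟨a, ha, b, hb, rfl⟩
    exact ⟨-a, O.neg_mem ha, -b, I.neg_mem hb, by ring⟩

lemma le_orderPlus (O : Subring (𝓞 K)) (I : Ideal (𝓞 K)) : O ≤ orderPlus O I :=
  fun a ha => ⟨a, ha, 0, I.zero_mem, by ring⟩

/-- The order `ℤ + f·𝒪_K` in `K`. -/
def zOrder (f : ℕ) : Subring (𝓞 K) where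
  carrier := {x : 𝓞 K | ∃ (a : ℤ) (b : 𝓞 K), x = (a : 𝓞 K) + (f : 𝓞 K) * b}
  one_mem' := ⟨1, 0, by push_cast; ring⟩
  zero_mem' := ⟨0, 0, by push_cast; ring⟩
  mul_mem' := by
    rintro x y ⟨a, b, rfl⟩ ⟨c, d, rfl⟩
    exact ⟨a * c, (a : 𝓞 K) * d + (c : 𝓞 K) * b + (f : 𝓞 K) * b * d, by push_cast; ring⟩
  add_mem' := by
    rintro x y ⟨a, b, rfl⟩ ⟨c, d, rfl⟩
    exact ⟨a + c, b + d, by push_cast; ring⟩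
  neg_mem' := by
    rintro x ⟨a, b, rfl⟩
    exact ⟨-a, -b, by push_cast; ring⟩

/-- The natural homomorphism `𝒪_K^× → (𝒪_K/𝔣)^×/(𝒪/𝔣)^×`: reduction modulo the
conductor `𝔣`, followed by the quotient by (the image of) `(𝒪/𝔣)^×`. -/
noncomputable def unitClassMap (O : Subring (𝓞 K)) :
    (𝓞 K)ˣ →*
      ((𝓞 K ⧸ conductorIdeal O)ˣ ⧸
        (Units.map (Subring.map (Ideal.Quotient.mk (conductorIdeal O)) O).subtype.toMonoidHom).range) :=
  (QuotientGroup.mk' _).comp (Units.map (Ideal.Quotient.mk (conductorIdeal O)).toMonoidHom)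

/-
In a half-factorial domain the number of irreducible factors is well defined up to units and
additive, so an irreducible `a` and a fixed nonzero `c` give `a ^ n * c` exactly `n + ℓ(c)`
factors. A nonzero element `c` of the conductor is available because `𝒪` is an order, and for
`x = π ^ 2 * y` we get `x ^ n * c = π ^ (2 * n) * (c * y ^ n)` with `c * y ^ n ∈ 𝒪`, so the
same element has at least `2 * n` factors. Taking `n = ℓ(c) + 1` is a contradiction.
-/

theorem Subring.IsOrder.conductorIdeal_ne_bot {O : Subring (𝓞 K)} (hO : O.IsOrder) :
    conductorIdeal O ≠ ⊥ := by
  obtain ⟨m, s, hs⟩ := Module.Finite.exists_fin (R := ℤ) (M := 𝓞 K)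
  choose n hn hns using fun i => hO (s i)
  set d : ℤ := ∏ i, n i
  have hd_gen : ∀ i, (d : 𝓞 K) * s i ∈ O := fun i => by
    rw [show d = n i * ∏ j ∈ Finset.univ.erase i, n j from
      (Finset.mul_prod_erase _ _ (Finset.mem_univ i)).symm, Int.cast_mul, mul_right_comm]
    exact O.mul_mem (hns i) (intCast_mem O _)
  have hd : ∀ y : 𝓞 K, (d : 𝓞 K) * y ∈ O := by
    have : Submodule.span ℤ (Set.range s) ≤
        O.toAddSubgroup.toIntSubmodule.comap (LinearMap.mulLeft ℤ (d : 𝓞 K)) :=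
      Submodule.span_le.2 (Set.range_subset_iff.2 hd_gen)
    rw [hs] at this
    exact fun y => this Submodule.mem_top
  have hd0 : (d : 𝓞 K) ≠ 0 := by
    exact_mod_cast Finset.prod_ne_zero_iff.mpr fun i _ => hn i
  exact (Submodule.ne_bot_iff _).2 ⟨d, hd, hd0⟩

namespace Multiset

variable {M : Type*} [CommMonoid M] {l : Multiset M}

theorem isUnit_prod_iff_eq_zero_of_irreducible (hl : ∀ b ∈ l, Irreducible b) :
    IsUnit l.prod ↔ l = 0 := by
  refine ⟨fun hu => ?_, fun h => by simp [h]⟩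
  by_contra hne
  obtain ⟨b, hb⟩ := exists_mem_of_ne_zero hne
  exact (hl b hb).not_isUnit (isUnit_of_dvd_unit (dvd_prod hb) hu)

theorem exists_prod_eq_of_associated_prod (hl : ∀ b ∈ l, Irreducible b) (hne : l ≠ 0) {z : M}
    (h : Associated l.prod z) :
    ∃ l' : Multiset M, (∀ b ∈ l', Irreducible b) ∧ l'.prod = z ∧ card l' = card l := by
  classical
  obtain ⟨u, rfl⟩ := h
  obtain ⟨b, hb⟩ := exists_mem_of_ne_zero hne
  refine ⟨(b * u) ::ₘ l.erase b, fun b' hb' => ?_, ?_, ?_⟩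
  · obtain rfl | hb' := mem_cons.1 hb'
    exacts [(irreducible_mul_units u).2 (hl b hb), hl b' (mem_of_mem_erase hb')]
  · rw [prod_cons, mul_right_comm, prod_erase hb]
  · rw [card_cons, card_erase_add_one hb]

end Multiset

namespace IsHalfFactorialRing

variable {R : Type*} [CommRing R] (h : IsHalfFactorialRing R)
include h

theorem exists_prod_associated {a : R} (ha : a ≠ 0) :
    ∃ l : Multiset R, (∀ b ∈ l, Irreducible b) ∧ Associated l.prod a := by
  by_cases hu : IsUnit a
  · exact ⟨0, by simp, by simpa using (associated_one_iff_isUnit.2 hu).symm⟩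
  · obtain ⟨l, hl, rfl⟩ := h.1 a ha hu
    exact ⟨l, hl, Associated.refl _⟩

theorem card_eq_of_associated_prod {l₁ l₂ : Multiset R} (hl₁ : ∀ b ∈ l₁, Irreducible b)
    (hl₂ : ∀ b ∈ l₂, Irreducible b) (h0 : l₁.prod ≠ 0) (hassoc : Associated l₁.prod l₂.prod) :
    Multiset.card l₁ = Multiset.card l₂ := by
  by_cases hu : IsUnit l₁.prod
  · have hu₂ := hassoc.isUnit hu
    rw [Multiset.isUnit_prod_iff_eq_zero_of_irreducible hl₁] at hu
    rw [Multiset.isUnit_prod_iff_eq_zero_of_irreducible hl₂] at hu₂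
    simp [hu, hu₂]
  · have hne : l₁ ≠ 0 := fun h => hu (by simp [h])
    obtain ⟨l', hl', hprod, hcard⟩ := Multiset.exists_prod_eq_of_associated_prod hl₁ hne hassoc
    rw [← hcard]
    exact h.2 _ (hassoc.ne_zero_iff.1 h0) (hu ∘ hassoc.isUnit_iff.2) l' l₂ hl' hl₂ hprod rfl

variable [NoZeroDivisors R]

theorem exists_le_add_of_pow_mul_eq {a p c : R} (ha : Irreducible a) (hp0 : p ≠ 0)
    (hp : ¬IsUnit p) (hc : c ≠ 0) :
    ∃ N : ℕ, ∀ (n k : ℕ) (w : R), a ^ n * c = p ^ k * w → k ≤ n + N := by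
  obtain ⟨lc, hlc, hlc_assoc⟩ := h.exists_prod_associated hc
  obtain ⟨lp, hlp, hlp_prod⟩ := h.1 p hp0 hp
  have hlp_pos : 0 < Multiset.card lp :=
    Multiset.card_pos.2 fun h0 => hp (by simp [← hlp_prod, h0])
  refine ⟨Multiset.card lc, fun n k w heq => ?_⟩
  have hlhs : a ^ n * c ≠ 0 := mul_ne_zero (pow_ne_zero _ ha.ne_zero) hc
  obtain ⟨lw, hlw, hlw_assoc⟩ := h.exists_prod_associated (right_ne_zero_of_mul (heq ▸ hlhs))
  have hassoc_left : Associated (Multiset.replicate n a + lc).prod (a ^ n * c) := by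
    rw [Multiset.prod_add, Multiset.prod_replicate]
    exact (Associated.refl _).mul_mul hlc_assoc
  have hassoc_right : Associated (k • lp + lw).prod (p ^ k * w) := by
    rw [Multiset.prod_add, Multiset.prod_nsmul, hlp_prod]
    exact (Associated.refl _).mul_mul hlw_assoc
  have hcard := h.card_eq_of_associated_prod
    (fun b hb => (Multiset.mem_add.1 hb).elim (fun hb => Multiset.eq_of_mem_replicate hb ▸ ha)
      (hlc b))
    (fun b hb => (Multiset.mem_add.1 hb).elim (fun hb => hlp b (Multiset.mem_of_mem_nsmul hb))
      (hlw b))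
    (hassoc_left.ne_zero_iff.2 hlhs) (hassoc_left.trans (heq ▸ hassoc_right.symm))
  simp only [Multiset.card_add, Multiset.card_replicate, Multiset.card_nsmul] at hcard
  nlinarith

end IsHalfFactorialRing

theorem not_irreducible_of_mem_sq_general (O : Subring (𝓞 K)) (hO : O.IsOrder)
    (hhf : IsHalfFactorialRing O)
    (P : Ideal (𝓞 K)) (hP : P.IsPrime)
    (π : 𝓞 K) (hπO : π ∈ O) (hπ : P = Ideal.span {π}) :
    ∀ (x : 𝓞 K) (hx : x ∈ O), x ∈ P ^ 2 → ¬ Irreducible (⟨x, hx⟩ : O) := by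
  intro x hx hxP hirr
  obtain ⟨y, rfl⟩ : π ^ 2 ∣ x := by
    rwa [hπ, Ideal.span_singleton_pow, Ideal.mem_span_singleton] at hxP
  obtain ⟨c, hcf, hc0⟩ := (Submodule.ne_bot_iff _).1 hO.conductorIdeal_ne_bot
  have hcO : ∀ z : 𝓞 K, c * z ∈ O := hcf
  have hπ0 : (⟨π, hπO⟩ : O) ≠ 0 := fun h0 => hirr.ne_zero <| by
    obtain rfl : π = 0 := congrArg Subtype.val h0
    ext
    simp
  have hπu : ¬IsUnit (⟨π, hπO⟩ : O) := fun hu =>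
    hP.ne_top (hπ ▸ Ideal.span_singleton_eq_top.2 (hu.map O.subtype))
  obtain ⟨N, hN⟩ := hhf.exists_le_add_of_pow_mul_eq hirr hπ0 hπu
    (c := ⟨c, by simpa using hcO 1⟩) (by simpa using hc0)
  have := hN (N + 1) (2 * (N + 1)) ⟨c * y ^ (N + 1), hcO _⟩ (by
    ext
    simp only [SubmonoidClass.mk_pow, MulMemClass.mk_mul_mk, map_mul, map_pow]
    ring)
  omega

/-- If `𝒪` is half-factorial, the spec-map is bijective, and `𝔓 = π𝒪_K ⊇ 𝔣` is a
principal prime of `𝒪_K` with `π ∈ 𝒪`, then no element of `𝔓² ∩ 𝒪` is irreducible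
in `𝒪`. -/
theorem not_irreducible_of_mem_sq (O : Subring (𝓞 K)) (hO : O.IsOrder)
    (hhf : IsHalfFactorialRing O) (hspec : SpecMapBijective O)
    (P : Ideal (𝓞 K)) (hP : P.IsPrime) (hPbot : P ≠ ⊥) (hPf : conductorIdeal O ≤ P)
    (π : 𝓞 K) (hπO : π ∈ O) (hπ : P = Ideal.span {π}) :
    ∀ (x : 𝓞 K) (hx : x ∈ O), x ∈ P ^ 2 → ¬ Irreducible (⟨x, hx⟩ : O) :=
  not_irreducible_of_mem_sq_general O hO hhf P hP π hπO hπ
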